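/- Let f : [a,b] → (0,∞) be continuous, let (x̲_n) and (x̄_n) be sequences with a < ⋯ < x̲_n < x̄_n < ⋯ < x̲_1 < x̄_1 ≤ b and lim_{n→∞} x̄_n = a, let β > 1, and define h : [a,b] → [0,∞) by h(x) := Σ_{n∈ℕ} n^{−β} χ_{[x̲_n, x̄_n)}(x). Then for every n ∈ ℕ, the Riemann–Stieltjes integral satisfies ∫_a^{x̲_n} f(x) dh(x) = n^{−β} f(x̲_n) − Σ_{k=n+1}^∞ k^{−β} ( f(x̄_k) − f(x̲_k) ). -/

import Mathlib

/-!
Write `h = ∑ₖ k^{-β} (1_{[x̲ₖ, ∞)} - 1_{[x̄ₖ, ∞)})`. Against a unit jump at `p`, a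
Riemann–Stieltjes sum picks out `f` at the tag of the cell containing `p`, which lies within the
mesh of `p`. By uniform continuity of `f` these sums therefore tend to `f p` (or to `0` when
`p ∉ (a, b]`) uniformly in `p`, and the summable weights `k^{-β}` let the limit pass through the
series. Over `[a, x̲ₙ]` the jumps that count are those at `x̲ₖ` for `k ≥ n` and at `x̄ₖ` for
`k > n`.
-/

open Set Filter MeasureTheory

/-- The Riemann–Stieltjes sum of `f` with respect to `g` for the tagged partition with
points `t 0, …, t m` and tags `ξ 0, …, ξ (m-1)`. -/
noncomputable def RSSum (f g : ℝ → ℝ) (m : ℕ) (t ξ : ℕ → ℝ) : ℝ :=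
  ∑ i ∈ Finset.range m, f (ξ i) * (g (t (i + 1)) - g (t i))

/-- `t`, `ξ` form a tagged partition of `[a, b]` into `m` subintervals. -/
def IsTaggedPartition (a b : ℝ) (m : ℕ) (t ξ : ℕ → ℝ) : Prop :=
  0 < m ∧ t 0 = a ∧ t m = b ∧ (∀ i < m, t i < t (i + 1)) ∧
    ∀ i < m, ξ i ∈ Set.Icc (t i) (t (i + 1))

/-- `I` is the Riemann–Stieltjes integral `∫_a^b f dg`: the Riemann–Stieltjes sums tend to `I`
as the mesh of the tagged partition tends to zero. -/
def HasRSIntegral (f g : ℝ → ℝ) (a b : ℝ) (I : ℝ) : Prop :=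
  ∀ ε > 0, ∃ δ > 0, ∀ (m : ℕ) (t ξ : ℕ → ℝ), IsTaggedPartition a b m t ξ →
    (∀ i < m, t (i + 1) - t i < δ) → |RSSum f g m t ξ - I| < ε

open Classical in
/-- The Riemann–Stieltjes integral `∫_a^b f dg`, defaulting to `0` if it does not exist. -/
noncomputable def RSIntegral (f g : ℝ → ℝ) (a b : ℝ) : ℝ :=
  if h : ∃ I, HasRSIntegral f g a b I then h.choose else 0

namespace IsTaggedPartition

variable {a b : ℝ} {m : ℕ} {t ξ : ℕ → ℝ}

lemma monotoneOn (hP : IsTaggedPartition a b m t ξ) : MonotoneOn t (Iic m) :=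
  monotoneOn_of_le_add_one ordConnected_Iic fun i _ _ hi => (hP.2.2.2.1 i hi).le

lemma mem_Icc (hP : IsTaggedPartition a b m t ξ) {i : ℕ} (hi : i ≤ m) : t i ∈ Icc a b := by
  refine ⟨?_, ?_⟩
  · simpa [hP.2.1] using hP.monotoneOn (mem_Iic.2 (Nat.zero_le m)) (mem_Iic.2 hi) (Nat.zero_le i)
  · simpa [hP.2.2.1] using hP.monotoneOn (mem_Iic.2 hi) (mem_Iic.2 le_rfl) hi

lemma Icc_subset (hP : IsTaggedPartition a b m t ξ) {i : ℕ} (hi : i < m) :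
    Icc (t i) (t (i + 1)) ⊆ Icc a b :=
  Icc_subset_Icc (hP.mem_Icc hi.le).1 (hP.mem_Icc hi).2

lemma tag_mem_Icc (hP : IsTaggedPartition a b m t ξ) {i : ℕ} (hi : i < m) : ξ i ∈ Icc a b :=
  hP.Icc_subset hi (hP.2.2.2.2 i hi)

lemma dist_tag_lt {δ : ℝ} (hP : IsTaggedPartition a b m t ξ)
    (hmesh : ∀ i < m, t (i + 1) - t i < δ) {i : ℕ} (hi : i < m) {p : ℝ}
    (hp : p ∈ Icc (t i) (t (i + 1))) : dist (ξ i) p < δ := by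
  have hξ := hP.2.2.2.2 i hi
  rw [Real.dist_eq, abs_sub_lt_iff]
  constructor <;> linarith [hmesh i hi, hp.1, hp.2, hξ.1, hξ.2]

end IsTaggedPartition

lemma RSSum_const_mul (f g : ℝ → ℝ) (c : ℝ) (m : ℕ) (t ξ : ℕ → ℝ) :
    RSSum f (fun x => c * g x) m t ξ = c * RSSum f g m t ξ := by
  simp only [RSSum, Finset.mul_sum]
  exact Finset.sum_congr rfl fun _ _ => by ring

lemma RSSum_sub (f g₁ g₂ : ℝ → ℝ) (m : ℕ) (t ξ : ℕ → ℝ) :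
    RSSum f (g₁ - g₂) m t ξ = RSSum f g₁ m t ξ - RSSum f g₂ m t ξ := by
  simp only [RSSum, Pi.sub_apply, ← Finset.sum_sub_distrib]
  exact Finset.sum_congr rfl fun _ _ => by ring

lemma hasSum_RSSum {ι : Type*} {g : ι → ℝ → ℝ} {G : ℝ → ℝ}
    (hg : ∀ x, HasSum (fun k => g k x) (G x)) (f : ℝ → ℝ) (m : ℕ) (t ξ : ℕ → ℝ) :
    HasSum (fun k => RSSum f (g k) m t ξ) (RSSum f G m t ξ) :=
  hasSum_sum fun i _ => ((hg _).sub (hg _)).mul_left (f (ξ i))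

lemma HasRSIntegral.sub {f g₁ g₂ : ℝ → ℝ} {a b I₁ I₂ : ℝ} (h₁ : HasRSIntegral f g₁ a b I₁)
    (h₂ : HasRSIntegral f g₂ a b I₂) : HasRSIntegral f (g₁ - g₂) a b (I₁ - I₂) := by
  intro ε hε
  obtain ⟨δ₁, hδ₁, H₁⟩ := h₁ (ε / 2) (half_pos hε)
  obtain ⟨δ₂, hδ₂, H₂⟩ := h₂ (ε / 2) (half_pos hε)
  refine ⟨min δ₁ δ₂, lt_min hδ₁ hδ₂, fun m t ξ hP hmesh => ?_⟩
  have e₁ := H₁ m t ξ hP fun i hi => (hmesh i hi).trans_le (min_le_left _ _)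
  have e₂ := H₂ m t ξ hP fun i hi => (hmesh i hi).trans_le (min_le_right _ _)
  rw [RSSum_sub]
  calc |RSSum f g₁ m t ξ - RSSum f g₂ m t ξ - (I₁ - I₂)|
      ≤ |RSSum f g₁ m t ξ - I₁| + |RSSum f g₂ m t ξ - I₂| := by
        rw [sub_sub_sub_comm]; exact abs_sub _ _
    _ < ε := by linarith

lemma RSSum_indicator_Ici_sub (f : ℝ → ℝ) (p : ℝ) (m : ℕ) (t ξ : ℕ → ℝ) :
    RSSum f ((Ici p).indicator 1) m t ξ -
        f p * ((Ici p).indicator 1 (t m) - (Ici p).indicator 1 (t 0)) =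
      ∑ i ∈ Finset.range m,
        (f (ξ i) - f p) * ((Ici p).indicator 1 (t (i + 1)) - (Ici p).indicator 1 (t i)) := by
  rw [RSSum, ← Finset.sum_range_sub (fun i => (Ici p).indicator 1 (t i)), Finset.mul_sum,
    ← Finset.sum_sub_distrib]
  exact Finset.sum_congr rfl fun _ _ => by ring

lemma indicator_Ici_sub_indicator_Ici {p x y : ℝ} (hxy : x ≤ y) :
    (Ici p).indicator 1 y - (Ici p).indicator 1 x = (Ioc x y).indicator (1 : ℝ → ℝ) p := by
  simp only [indicator_apply, mem_Ici, mem_Ioc, Pi.one_apply]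
  split_ifs <;> grind

lemma abs_RSSum_indicator_Ici_sub_le {f : ℝ → ℝ} {a b δ ε : ℝ} {m : ℕ} {t ξ : ℕ → ℝ}
    (hf : ∀ x ∈ Icc a b, ∀ y ∈ Icc a b, dist x y < δ → dist (f x) (f y) < ε) (hε : 0 ≤ ε)
    (hP : IsTaggedPartition a b m t ξ) (hmesh : ∀ i < m, t (i + 1) - t i < δ) (p : ℝ) :
    |RSSum f ((Ici p).indicator 1) m t ξ - (Ioc a b).indicator f p| ≤ ε := by
  obtain ⟨-, ht0, htm, ht, -⟩ := id hP
  have hab : a ≤ b := htm ▸ (hP.mem_Icc le_rfl).1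
  have htelescope : (Ici p).indicator 1 (t m) - (Ici p).indicator 1 (t 0) =
      (Ioc a b).indicator (1 : ℝ → ℝ) p := by
    rw [ht0, htm, indicator_Ici_sub_indicator_Ici hab]
  set e : ℕ → ℝ := fun i => (Ioc (t i) (t (i + 1))).indicator 1 p
  have he : ∀ i ∈ Finset.range m,
      (Ici p).indicator 1 (t (i + 1)) - (Ici p).indicator 1 (t i) = e i := fun i hi =>
    indicator_Ici_sub_indicator_Ici (ht i (Finset.mem_range.1 hi)).le
  have he_nonneg : ∀ i, 0 ≤ e i := fun i => indicator_nonneg (fun _ _ => zero_le_one) _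
  -- the step only rises on the cell containing `p`, whose tag is within `δ` of `p`
  have hterm : ∀ i ∈ Finset.range m, |f (ξ i) - f p| * e i ≤ ε * e i := by
    intro i hi
    rw [Finset.mem_range] at hi
    by_cases hp : p ∈ Ioc (t i) (t (i + 1))
    · have hp' := Ioc_subset_Icc_self hp
      have hclose :=
        hf _ (hP.tag_mem_Icc hi) p (hP.Icc_subset hi hp') (hP.dist_tag_lt hmesh hi hp')
      rw [Real.dist_eq] at hclose
      exact mul_le_mul_of_nonneg_right hclose.le (he_nonneg i)
    · simp [e, indicator_of_notMem hp]
  have hval : (Ioc a b).indicator f p = f p * (Ioc a b).indicator 1 p := by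
    by_cases hp : p ∈ Ioc a b <;> simp [hp]
  calc |RSSum f ((Ici p).indicator 1) m t ξ - (Ioc a b).indicator f p|
      = |∑ i ∈ Finset.range m, (f (ξ i) - f p) * e i| := by
        rw [hval, ← htelescope, RSSum_indicator_Ici_sub, Finset.sum_congr rfl fun i hi => by
          rw [he i hi]]
    _ ≤ ∑ i ∈ Finset.range m, |f (ξ i) - f p| * e i := by
        refine (Finset.abs_sum_le_sum_abs _ _).trans_eq (Finset.sum_congr rfl fun i _ => ?_)
        rw [abs_mul, abs_of_nonneg (he_nonneg i)]
    _ ≤ ∑ i ∈ Finset.range m, ε * e i := Finset.sum_le_sum hterm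
    _ = ε * (Ioc a b).indicator 1 p := by
        rw [← Finset.mul_sum, ← Finset.sum_congr rfl he,
          Finset.sum_range_sub fun i => (Ici p).indicator 1 (t i), htelescope]
    _ ≤ ε := by by_cases hp : p ∈ Ioc a b <;> simp [hp, hε]

lemma summable_mul_indicator_Ici {ι : Type*} {c : ι → ℝ} (hc : Summable c) (p : ι → ℝ) (x : ℝ) :
    Summable fun k => c k * (Ici (p k)).indicator 1 x := by
  refine hc.norm.of_norm_bounded fun k => ?_
  rw [norm_mul]
  refine mul_le_of_le_one_right (norm_nonneg _) ?_
  simpa using norm_indicator_le_norm_self (1 : ℝ → ℝ) x (s := Ici (p k))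

lemma summable_mul_indicator_Ioc {ι : Type*} {f : ℝ → ℝ} {a b : ℝ}
    (hf : ContinuousOn f (Icc a b)) {c : ι → ℝ} (hc : Summable c) (p : ι → ℝ) :
    Summable fun k => c k * (Ioc a b).indicator f (p k) := by
  obtain ⟨M, hM⟩ := isCompact_Icc.exists_bound_of_continuousOn hf
  refine (hc.norm.mul_right |M|).of_norm_bounded fun k => ?_
  rw [norm_mul]
  refine mul_le_mul_of_nonneg_left ?_ (norm_nonneg _)
  by_cases hp : p k ∈ Ioc a b
  · rw [indicator_of_mem hp]
    exact (hM _ (Ioc_subset_Icc_self hp)).trans (le_abs_self M)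
  · simp [indicator_of_notMem hp]

theorem hasRSIntegral_tsum_mul_indicator_Ici {ι : Type*} {f : ℝ → ℝ} {a b : ℝ}
    (hf : ContinuousOn f (Icc a b)) {c : ι → ℝ} (hc : Summable c) (p : ι → ℝ) :
    HasRSIntegral f (fun x => ∑' k, c k * (Ici (p k)).indicator 1 x) a b
      (∑' k, c k * (Ioc a b).indicator f (p k)) := by
  intro ε hε
  set S := ∑' k, |c k|
  have hS : 0 ≤ S := tsum_nonneg fun _ => abs_nonneg _
  have hε' : 0 < ε / (S + 1) := by positivity
  obtain ⟨δ, hδ, hf'⟩ := Metric.uniformContinuousOn_iff.1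
    (isCompact_Icc.uniformContinuousOn_of_continuous hf) _ hε'
  refine ⟨δ, hδ, fun m t ξ hP hmesh => ?_⟩
  have hjumps : HasSum (fun k => c k * RSSum f ((Ici (p k)).indicator 1) m t ξ)
      (RSSum f (fun x => ∑' k, c k * (Ici (p k)).indicator 1 x) m t ξ) := by
    simpa only [RSSum_const_mul] using
      hasSum_RSSum (fun x => (summable_mul_indicator_Ici hc p x).hasSum) f m t ξ
  have hvalues := (summable_mul_indicator_Ioc hf hc p).hasSum
  calc _ ≤ ε / (S + 1) * S := by
        refine (hjumps.sub hvalues).norm_le_of_bounded (hc.abs.hasSum.mul_left _) fun k => ?_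
        rw [← mul_sub, norm_mul, Real.norm_eq_abs, Real.norm_eq_abs, mul_comm]
        exact mul_le_mul_of_nonneg_right
          (abs_RSSum_indicator_Ici_sub_le hf' hε'.le hP hmesh (p k)) (abs_nonneg _)
    _ < ε := by
        rw [div_mul_eq_mul_div, div_lt_iff₀ (by positivity)]
        nlinarith

lemma xu_lt_xl_of_lt {xl xu : ℕ → ℝ} (h_pair : ∀ n : ℕ, 1 ≤ n → xl n < xu n)
    (h_order : ∀ n : ℕ, 1 ≤ n → xu (n + 1) < xl n) {j k : ℕ} (hj : 1 ≤ j) (hjk : j < k) :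
    xu k < xl j := by
  induction k, hjk using Nat.le_induction with
  | base => exact h_order j hj
  | succ k hk ih => linarith [h_order k (by omega), h_pair k (by omega)]

lemma ite_mem_Ico_eq_sub {c xl xu : ℕ → ℝ} (hc : c 0 = 0)
    (h_pair : ∀ n : ℕ, 1 ≤ n → xl n < xu n) (k : ℕ) (x : ℝ) :
    (if 1 ≤ k ∧ x ∈ Ico (xl k) (xu k) then c k else 0) =
      c k * (Ici (xl k)).indicator 1 x - c k * (Ici (xu k)).indicator 1 x := by
  rcases Nat.eq_zero_or_pos k with rfl | hk
  · simp [hc]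
  · rw [← mul_sub, ← Pi.sub_apply ((Ici (xl k)).indicator 1), ← indicator_sdiff
      (Ici_subset_Ici.2 (h_pair k hk).le), Ici_sdiff_Ici, indicator_apply]
    simp [Nat.one_le_iff_ne_zero.2 hk.ne']

lemma mul_indicator_Ioc_sub_eq {c xl xu : ℕ → ℝ} {f : ℝ → ℝ} {a : ℝ} (hc : c 0 = 0)
    (h_lt : ∀ n : ℕ, 1 ≤ n → a < xl n) (h_pair : ∀ n : ℕ, 1 ≤ n → xl n < xu n)
    (h_order : ∀ n : ℕ, 1 ≤ n → xu (n + 1) < xl n) {n : ℕ} (hn : 1 ≤ n) (k : ℕ) :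
    c k * (Ioc a (xl n)).indicator f (xl k) - c k * (Ioc a (xl n)).indicator f (xu k) =
      (if k = n then c n * f (xl n) else 0) -
        (if n + 1 ≤ k then c k * (f (xu k) - f (xl k)) else 0) := by
  rcases Nat.eq_zero_or_pos k with rfl | hk
  · rw [if_neg (by omega), if_neg (by omega), hc]
    ring
  have hxl := h_lt k hk
  have hxu := h_pair k hk
  rcases lt_trichotomy k n with hkn | rfl | hkn
  · have := xu_lt_xl_of_lt h_pair h_order hk hkn
    have := h_pair n hn
    rw [indicator_of_notMem (by grind), indicator_of_notMem (by grind), if_neg hkn.ne,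
      if_neg (by omega)]
    ring
  · rw [indicator_of_mem (show xl k ∈ Ioc a (xl k) from ⟨hxl, le_rfl⟩),
      indicator_of_notMem (by grind), if_pos rfl, if_neg (by omega)]
    ring
  · have := xu_lt_xl_of_lt h_pair h_order hn hkn
    rw [indicator_of_mem (show xl k ∈ Ioc a (xl n) from ⟨hxl, by linarith⟩),
      indicator_of_mem (show xu k ∈ Ioc a (xl n) from ⟨by linarith, this.le⟩),
      if_neg hkn.ne', if_pos (Nat.succ_le_of_lt hkn)]
    ring

theorem stmt_6_general (a b β : ℝ) (f : ℝ → ℝ) (xl xu : ℕ → ℝ) (hβ : 1 < β)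
    (hf_cont : ContinuousOn f (Set.Icc a b))
    (h_lt : ∀ n : ℕ, 1 ≤ n → a < xl n)
    (h_pair : ∀ n : ℕ, 1 ≤ n → xl n < xu n)
    (h_order : ∀ n : ℕ, 1 ≤ n → xu (n + 1) < xl n)
    (h_top : xu 1 ≤ b)
    (h : ℝ → ℝ)
    (hh : ∀ x : ℝ, h x =
      ∑' n : ℕ, if 1 ≤ n ∧ x ∈ Set.Ico (xl n) (xu n) then (n : ℝ) ^ (-β) else 0) :
    ∀ n : ℕ, 1 ≤ n →
      HasRSIntegral f h a (xl n)
        ((n : ℝ) ^ (-β) * f (xl n) -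
          ∑' k : ℕ, if n + 1 ≤ k then (k : ℝ) ^ (-β) * (f (xu k) - f (xl k)) else 0) := by
  intro n hn
  set c : ℕ → ℝ := fun k => (k : ℝ) ^ (-β)
  have hc : Summable c := Real.summable_nat_rpow.2 (by linarith)
  have hc0 : c 0 = 0 := by simp [c, Real.zero_rpow (by linarith : -β ≠ 0)]
  have hxl_le : xl n ≤ b := by
    rcases hn.eq_or_lt with rfl | hn1
    · linarith [h_pair 1 le_rfl]
    · linarith [xu_lt_xl_of_lt h_pair h_order le_rfl hn1, h_pair 1 le_rfl, h_pair n hn]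
  have h_eq : h = (fun x => ∑' k, c k * (Ici (xl k)).indicator 1 x) -
      fun x => ∑' k, c k * (Ici (xu k)).indicator 1 x := by
    funext x
    rw [hh, Pi.sub_apply, ← (summable_mul_indicator_Ici hc xl x).tsum_sub
      (summable_mul_indicator_Ici hc xu x)]
    exact tsum_congr (ite_mem_Ico_eq_sub hc0 h_pair · x)
  have hf := hf_cont.mono (Icc_subset_Icc_right hxl_le)
  have hl := (summable_mul_indicator_Ioc hf hc xl).hasSum
  have hu := (summable_mul_indicator_Ioc hf hc xu).hasSum
  have htail := (hasSum_ite_eq n (c n * f (xl n))).sub (hl.sub hu)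
  simp only [mul_indicator_Ioc_sub_eq hc0 h_lt h_pair h_order hn, sub_sub_cancel] at htail
  rw [htail.tsum_eq, sub_sub_cancel, h_eq]
  exact (hasRSIntegral_tsum_mul_indicator_Ici hf hc xl).sub
    (hasRSIntegral_tsum_mul_indicator_Ici hf hc xu)

/-- the value of the Riemann–Stieltjes integral of `f` against the step
function `h` up to `x̲ₙ` is `n^{-β} f(x̲ₙ) − Σ_{k>n} k^{-β} (f(x̄ₖ) − f(x̲ₖ))`. -/
theorem stmt_6 (a b β : ℝ) (f : ℝ → ℝ) (xl xu : ℕ → ℝ) (hβ : 1 < β)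
    (hf_cont : ContinuousOn f (Set.Icc a b))
    (hf_pos : ∀ x ∈ Set.Icc a b, 0 < f x)
    (h_lt : ∀ n : ℕ, 1 ≤ n → a < xl n)
    (h_pair : ∀ n : ℕ, 1 ≤ n → xl n < xu n)
    (h_order : ∀ n : ℕ, 1 ≤ n → xu (n + 1) < xl n)
    (h_top : xu 1 ≤ b)
    (h_lim : Filter.Tendsto xu Filter.atTop (nhds a))
    (h : ℝ → ℝ)
    (hh : ∀ x : ℝ, h x =
      ∑' n : ℕ, if 1 ≤ n ∧ x ∈ Set.Ico (xl n) (xu n) then (n : ℝ) ^ (-β) else 0) :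
    ∀ n : ℕ, 1 ≤ n →
      HasRSIntegral f h a (xl n)
        ((n : ℝ) ^ (-β) * f (xl n) -
          ∑' k : ℕ, if n + 1 ≤ k then (k : ℝ) ^ (-β) * (f (xu k) - f (xl k)) else 0) :=
  stmt_6_general a b β f xl xu hβ hf_cont h_lt h_pair h_order h_top h hh
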